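/- Let G=(V,E) be a finite connected graph with m edges, let w_{0,e}>0 be initial weights, fix θ>1, α∈[0,1] and a step size s with 0<s<1/(mθ). Define iterates by w_e^{(0)}=w_{0,e} and w_e^{(j+1)} = w_e^{(j)} + s·(−κ_e^{(j)} + (∑_{τ∈E} κ_τ^{(j)}·w_τ^{(j)})/(∑_{τ∈E} w_τ^{(j)}))·w_e^{(j)}, where κ_e^{(j)} is Ollivier's α-Ricci curvature of the edge e computed from the weights w^{(j)}, and assume that at every step j and every edge e the θ-surgery condition w_e^{(j)}/ρ_e^{(j)} ≤ θ holds, where ρ_e^{(j)} is the distance of the endpoints of e in the weights w^{(j)}. Then every iterate is strictly positive (so the flow has a unique global solution) and for all j∈ℕ and all e∈E: (1−mθs)^j·w_{0,e} ≤ w_e^{(j)} ≤ ∑_{τ∈E} w_{0,τ}. -/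

import Mathlib

open Finset

section RicciDefs

variable {V : Type*}

/-- The sum of the weights of the edges of a walk. -/
noncomputable def walkWeight {G : SimpleGraph V} (w : Sym2 V → ℝ) {u v : V} (p : G.Walk u v) : ℝ :=
  (p.edges.map w).sum

/-- The weighted graph distance: infimum of total weight over walks joining `u` and `v`. -/
noncomputable def gdist (G : SimpleGraph V) (w : Sym2 V → ℝ) (u v : V) : ℝ :=
  sInf {x : ℝ | ∃ p : G.Walk u v, x = walkWeight w p}

/-- A choice of ordered endpoints of an unordered pair. -/
noncomputable def endpoints (e : Sym2 V) : V × V := Quot.out e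

/-- The weighted distance between the endpoints of an edge. -/
noncomputable def edist (G : SimpleGraph V) (w : Sym2 V → ℝ) (e : Sym2 V) : ℝ :=
  gdist G w (endpoints e).1 (endpoints e).2

/-- The `α`-lazy one-step random walk at `x`. -/
noncomputable def lazyWalk (G : SimpleGraph V) [Fintype V] [DecidableEq V] [DecidableRel G.Adj]
    (w : Sym2 V → ℝ) (α : ℝ) (x : V) : V → ℝ := fun z =>
  if z = x then α
  else if G.Adj x z then (1 - α) * w s(x, z) / ∑ u ∈ G.neighborFinset x, w s(x, u)
  else 0

/-- A probability measure on a finite vertex set. -/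
def IsProbMeasure [Fintype V] (μ : V → ℝ) : Prop :=
  (∀ x, 0 ≤ μ x) ∧ ∑ x, μ x = 1

/-- A coupling between two probability measures. -/
def IsCoupling [Fintype V] (μ₁ μ₂ : V → ℝ) (A : V → V → ℝ) : Prop :=
  (∀ u v, A u v ∈ Set.Icc (0 : ℝ) 1) ∧ (∀ u, ∑ x, A u x = μ₁ u) ∧ (∀ v, ∑ y, A y v = μ₂ v)

/-- The Wasserstein distance between two probability measures. -/
noncomputable def wasserstein [Fintype V] (G : SimpleGraph V) (w : Sym2 V → ℝ)
    (μ₁ μ₂ : V → ℝ) : ℝ :=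
  sInf {x : ℝ | ∃ A : V → V → ℝ, IsCoupling μ₁ μ₂ A ∧ x = ∑ u, ∑ v, A u v * gdist G w u v}

/-- Ollivier's `α`-Ricci curvature of an edge. -/
noncomputable def ollivier [Fintype V] [DecidableEq V] (G : SimpleGraph V) [DecidableRel G.Adj]
    (w : Sym2 V → ℝ) (α : ℝ) (e : Sym2 V) : ℝ :=
  1 - wasserstein G w (lazyWalk G w α (endpoints e).1) (lazyWalk G w α (endpoints e).2)
        / edist G w e

end RicciDefs

set_option linter.unusedSectionVars false
set_option linter.unusedVariables false
section Aux
variable {V : Type*} [Fintype V] [DecidableEq V] {G : SimpleGraph V} [DecidableRel G.Adj]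

lemma walkWeight_nonneg {w : Sym2 V → ℝ} (hw : ∀ e ∈ G.edgeFinset, 0 ≤ w e)
    {u v : V} (p : G.Walk u v) : 0 ≤ walkWeight w p := by
  apply List.sum_nonneg
  intro x hx
  obtain ⟨e, he, rfl⟩ := List.mem_map.mp hx
  exact hw e (by simpa using p.edges_subset_edgeSet he)

lemma gdist_nonneg {w : Sym2 V → ℝ} (hw : ∀ e ∈ G.edgeFinset, 0 ≤ w e) (u v : V) :
    0 ≤ gdist G w u v := by
  apply Real.sInf_nonneg
  rintro x ⟨p, rfl⟩
  exact walkWeight_nonneg hw p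

lemma gdist_le {w : Sym2 V → ℝ} (hw : ∀ e ∈ G.edgeFinset, 0 ≤ w e)
    {u v : V} (p : G.Walk u v) : gdist G w u v ≤ walkWeight w p :=
  csInf_le ⟨0, by rintro x ⟨q, rfl⟩; exact walkWeight_nonneg hw q⟩ ⟨p, rfl⟩

lemma gdist_le_sum (hconn : G.Connected) {w : Sym2 V → ℝ}
    (hw : ∀ e ∈ G.edgeFinset, 0 ≤ w e) (u v : V) :
    gdist G w u v ≤ ∑ e ∈ G.edgeFinset, w e := by
  obtain ⟨p⟩ := hconn u v
  refine (gdist_le hw p.bypass).trans ?_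
  have hnd : p.bypass.edges.Nodup := p.bypass_isPath.edges_nodup
  unfold walkWeight
  rw [← List.sum_toFinset _ hnd]
  apply Finset.sum_le_sum_of_subset_of_nonneg
  · intro e he
    simpa using p.bypass.edges_subset_edgeSet (List.mem_toFinset.mp he)
  · intro e he _
    exact hw e he

lemma gdist_ge (hE : G.edgeFinset.Nonempty) {w : Sym2 V → ℝ}
    (hw : ∀ e ∈ G.edgeFinset, 0 < w e) {u v : V} (h : u ≠ v) (hr : G.Reachable u v) :
    G.edgeFinset.inf' hE w ≤ gdist G w u v := by
  apply le_csInf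
  · obtain ⟨p⟩ := hr
    exact ⟨walkWeight w p, p, rfl⟩
  rintro x ⟨p, rfl⟩
  cases p with
  | nil => exact absurd rfl h
  | cons hadj q =>
    rename_i b
    have h1 : s(u, b) ∈ G.edgeFinset := by simpa using hadj
    have : walkWeight w (SimpleGraph.Walk.cons hadj q) = w s(u, b) + walkWeight w q := by
      simp [walkWeight]
    rw [this]
    have h2 : (0:ℝ) ≤ walkWeight w q := walkWeight_nonneg (fun e he => (hw e he).le) q
    have h3 : G.edgeFinset.inf' hE w ≤ w s(u, b) := Finset.inf'_le _ h1
    linarith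

lemma gdist_pos (hconn : G.Connected) {w : Sym2 V → ℝ}
    (hw : ∀ e ∈ G.edgeFinset, 0 < w e) {u v : V} (h : u ≠ v) :
    0 < gdist G w u v := by
  have hE : G.edgeFinset.Nonempty := by
    obtain ⟨p⟩ := hconn u v
    cases p with
    | nil => exact absurd rfl h
    | cons hadj q =>
      rename_i b
      exact ⟨s(u, b), by simp only [SimpleGraph.mem_edgeFinset, SimpleGraph.mem_edgeSet]; exact hadj⟩
  refine lt_of_lt_of_le ?_ (gdist_ge hE hw h (hconn u v))
  rw [Finset.lt_inf'_iff]
  exact hw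

lemma endpoints_adj {e : Sym2 V} (he : e ∈ G.edgeFinset) :
    G.Adj (endpoints e).1 (endpoints e).2 := by
  rw [SimpleGraph.mem_edgeFinset] at he
  have : s((endpoints e).1, (endpoints e).2) = e := by
    exact Quot.out_eq e
  rw [← SimpleGraph.mem_edgeSet, this]
  exact he

lemma edist_pos' (hconn : G.Connected) {w : Sym2 V → ℝ}
    (hw : ∀ e ∈ G.edgeFinset, 0 < w e) {e : Sym2 V} (he : e ∈ G.edgeFinset) :
    0 < edist G w e :=
  gdist_pos hconn hw (endpoints_adj he).ne

end Aux

set_option linter.unusedSectionVars false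
section Aux2
variable {V : Type*} [Fintype V] [DecidableEq V] {G : SimpleGraph V} [DecidableRel G.Adj]

lemma lazyWalk_isProbMeasure {w : Sym2 V → ℝ} (hw : ∀ e ∈ G.edgeFinset, 0 < w e)
    {α : ℝ} (hα : α ∈ Set.Icc (0:ℝ) 1) {x : V} (hx : (G.neighborFinset x).Nonempty) :
    IsProbMeasure (lazyWalk G w α x) := by
  obtain ⟨hα0, hα1⟩ := hα
  have hwpos : ∀ u ∈ G.neighborFinset x, 0 < w s(x, u) := by
    intro u hu
    apply hw
    simp only [SimpleGraph.mem_edgeFinset, SimpleGraph.mem_edgeSet]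
    exact (SimpleGraph.mem_neighborFinset _ _ _).mp hu
  have hD : 0 < ∑ u ∈ G.neighborFinset x, w s(x, u) := Finset.sum_pos hwpos hx
  constructor
  · intro z
    unfold lazyWalk
    split
    · exact hα0
    split
    · rename_i h1 h2
      have hwz := hwpos _ ((SimpleGraph.mem_neighborFinset _ _ _).mpr h2)
      exact div_nonneg (mul_nonneg (by linarith) hwz.le) hD.le
    · exact le_refl 0
  · have hsplit : ∑ z, lazyWalk G w α x z
        = lazyWalk G w α x x + ∑ z ∈ Finset.univ.erase x, lazyWalk G w α x z := by
      rw [Finset.add_sum_erase _ _ (Finset.mem_univ x)]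
    rw [hsplit]
    have h1 : lazyWalk G w α x x = α := by simp [lazyWalk]
    have hsub : G.neighborFinset x ⊆ Finset.univ.erase x := by
      intro z hz
      simp only [Finset.mem_erase, Finset.mem_univ, and_true]
      exact ((SimpleGraph.mem_neighborFinset _ _ _).mp hz).ne'
    have hzero : ∀ z ∈ Finset.univ.erase x, z ∉ G.neighborFinset x → lazyWalk G w α x z = 0 := by
      intro z hz hnz
      have hne : z ≠ x := (Finset.mem_erase.mp hz).1
      have hnadj : ¬ G.Adj x z := fun h => hnz ((SimpleGraph.mem_neighborFinset _ _ _).mpr h)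
      simp [lazyWalk, hne, hnadj]
    have h2 : ∑ z ∈ Finset.univ.erase x, lazyWalk G w α x z
        = ∑ z ∈ G.neighborFinset x, (1 - α) * w s(x, z) / ∑ u ∈ G.neighborFinset x, w s(x, u) := by
      rw [← Finset.sum_subset hsub hzero]
      apply Finset.sum_congr rfl
      intro z hz
      have hadj := (SimpleGraph.mem_neighborFinset _ _ _).mp hz
      simp [lazyWalk, hadj.ne', hadj]
    rw [h1, h2]
    rw [← Finset.sum_div, ← Finset.mul_sum, mul_div_assoc, div_self hD.ne']
    ring

lemma probMeasure_le_one {μ : V → ℝ} (h : IsProbMeasure μ) (x : V) : μ x ≤ 1 := by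
  rw [← h.2]
  exact Finset.single_le_sum (fun i _ => h.1 i) (Finset.mem_univ x)

lemma prodCoupling_isCoupling {μ₁ μ₂ : V → ℝ} (h₁ : IsProbMeasure μ₁) (h₂ : IsProbMeasure μ₂) :
    IsCoupling μ₁ μ₂ (fun u v => μ₁ u * μ₂ v) := by
  refine ⟨fun u v => ⟨mul_nonneg (h₁.1 u) (h₂.1 v), ?_⟩, fun u => ?_, fun v => ?_⟩
  · exact mul_le_one₀ (probMeasure_le_one h₁ u) (h₂.1 v) (probMeasure_le_one h₂ v)
  · rw [← Finset.mul_sum, h₂.2, mul_one]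
  · rw [← Finset.sum_mul, h₁.2, one_mul]

lemma wasserstein_nonneg (hconn : G.Connected) {w : Sym2 V → ℝ}
    (hw : ∀ e ∈ G.edgeFinset, 0 ≤ w e) (μ₁ μ₂ : V → ℝ) :
    0 ≤ wasserstein G w μ₁ μ₂ := by
  apply Real.sInf_nonneg
  rintro x ⟨A, hA, rfl⟩
  apply Finset.sum_nonneg
  intro u _
  apply Finset.sum_nonneg
  intro v _
  exact mul_nonneg (hA.1 u v).1 (gdist_nonneg hw u v)

lemma wasserstein_le_sum (hconn : G.Connected) {w : Sym2 V → ℝ}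
    (hw : ∀ e ∈ G.edgeFinset, 0 ≤ w e) {μ₁ μ₂ : V → ℝ}
    (h₁ : IsProbMeasure μ₁) (h₂ : IsProbMeasure μ₂) :
    wasserstein G w μ₁ μ₂ ≤ ∑ e ∈ G.edgeFinset, w e := by
  set S := ∑ e ∈ G.edgeFinset, w e with hSdef
  have hS : 0 ≤ S := Finset.sum_nonneg hw
  have hmem : (∑ u, ∑ v, (μ₁ u * μ₂ v) * gdist G w u v) ∈
      {x : ℝ | ∃ A : V → V → ℝ, IsCoupling μ₁ μ₂ A ∧ x = ∑ u, ∑ v, A u v * gdist G w u v} :=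
    ⟨fun u v => μ₁ u * μ₂ v, prodCoupling_isCoupling h₁ h₂, rfl⟩
  have hbdd : BddBelow {x : ℝ | ∃ A : V → V → ℝ, IsCoupling μ₁ μ₂ A ∧
      x = ∑ u, ∑ v, A u v * gdist G w u v} := by
    refine ⟨0, ?_⟩
    rintro x ⟨A, hA, rfl⟩
    apply Finset.sum_nonneg
    intro u _
    apply Finset.sum_nonneg
    intro v _
    exact mul_nonneg (hA.1 u v).1 (gdist_nonneg hw u v)
  refine (csInf_le hbdd hmem).trans ?_
  calc (∑ u, ∑ v, (μ₁ u * μ₂ v) * gdist G w u v)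
      ≤ ∑ u, ∑ v, (μ₁ u * μ₂ v) * S := by
        apply Finset.sum_le_sum
        intro u _
        apply Finset.sum_le_sum
        intro v _
        exact mul_le_mul_of_nonneg_left (gdist_le_sum hconn hw u v)
          (mul_nonneg (h₁.1 u) (h₂.1 v))
    _ = (∑ u, μ₁ u) * ((∑ v, μ₂ v) * S) := by
        rw [Finset.sum_mul]
        refine Finset.sum_congr rfl fun u _ => ?_
        rw [Finset.sum_mul, Finset.mul_sum]
        exact Finset.sum_congr rfl fun v _ => (mul_assoc _ _ _)
    _ = S := by rw [h₁.2, h₂.2, one_mul, one_mul]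
end Aux2


section MainAux
set_option linter.unusedSectionVars false
variable {V : Type*} [Fintype V] [DecidableEq V] {G : SimpleGraph V} [DecidableRel G.Adj]

lemma ollivier_le_one (hconn : G.Connected) {w : Sym2 V → ℝ}
    (hw : ∀ e ∈ G.edgeFinset, 0 < w e) {α : ℝ} {e : Sym2 V} (he : e ∈ G.edgeFinset) :
    ollivier G w α e ≤ 1 := by
  unfold ollivier
  have hρ : 0 < edist G w e := edist_pos' hconn hw he
  have hW : 0 ≤ wasserstein G w (lazyWalk G w α (endpoints e).1) (lazyWalk G w α (endpoints e).2) :=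
    wasserstein_nonneg hconn (fun e he => (hw e he).le) _ _
  have := div_nonneg hW hρ.le
  linarith

lemma one_sub_ollivier_mul_le (hconn : G.Connected) {w : Sym2 V → ℝ}
    (hw : ∀ e ∈ G.edgeFinset, 0 < w e) {α : ℝ} (hα : α ∈ Set.Icc (0:ℝ) 1)
    {θ : ℝ} {e : Sym2 V} (he : e ∈ G.edgeFinset)
    (hsurg : w e / edist G w e ≤ θ) :
    (1 - ollivier G w α e) * w e ≤ θ * ∑ τ ∈ G.edgeFinset, w τ := by
  have hadj := endpoints_adj (G := G) he
  have hρ : 0 < edist G w e := edist_pos' hconn hw he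
  have h1 : ((G.neighborFinset (endpoints e).1)).Nonempty :=
    ⟨(endpoints e).2, (SimpleGraph.mem_neighborFinset _ _ _).mpr hadj⟩
  have h2 : ((G.neighborFinset (endpoints e).2)).Nonempty :=
    ⟨(endpoints e).1, (SimpleGraph.mem_neighborFinset _ _ _).mpr hadj.symm⟩
  have hμ1 := lazyWalk_isProbMeasure hw hα h1
  have hμ2 := lazyWalk_isProbMeasure hw hα h2
  set W := wasserstein G w (lazyWalk G w α (endpoints e).1) (lazyWalk G w α (endpoints e).2) with hWdef
  have hW0 : 0 ≤ W := wasserstein_nonneg hconn (fun e he => (hw e he).le) _ _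
  have hWS : W ≤ ∑ τ ∈ G.edgeFinset, w τ :=
    wasserstein_le_sum hconn (fun e he => (hw e he).le) hμ1 hμ2
  have hq0 : 0 ≤ w e / edist G w e := div_nonneg (hw e he).le hρ.le
  have key : (1 - ollivier G w α e) * w e = W * (w e / edist G w e) := by
    unfold ollivier
    field_simp
    ring
  rw [key]
  calc W * (w e / edist G w e) ≤ (∑ τ ∈ G.edgeFinset, w τ) * θ :=
        mul_le_mul hWS hsurg hq0 (Finset.sum_nonneg fun τ hτ => (hw τ hτ).le)
    _ = θ * ∑ τ ∈ G.edgeFinset, w τ := mul_comm _ _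

end MainAux

/-- Theorem 2.4 (i): bounds for the discrete normalized Ricci curvature flow with
Ollivier's curvature, under the θ-surgery condition. -/
theorem ollivier_normalized_flow_surgery_bounds {V : Type*} [Fintype V] [DecidableEq V]
    (G : SimpleGraph V) [DecidableRel G.Adj] (hconn : G.Connected)
    (m : ℕ) (hm : G.edgeFinset.card = m)
    (θ : ℝ) (hθ : 1 < θ)
    (α : ℝ) (hα : α ∈ Set.Icc (0 : ℝ) 1)
    (s : ℝ) (hs0 : 0 < s) (hs1 : s < 1 / ((m : ℝ) * θ))
    (w : ℕ → Sym2 V → ℝ)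
    (hpos0 : ∀ e ∈ G.edgeFinset, 0 < w 0 e)
    (hflow : ∀ j : ℕ, ∀ e ∈ G.edgeFinset,
      w (j + 1) e = w j e +
        s * (-(ollivier G (w j) α e) +
          (∑ τ ∈ G.edgeFinset, ollivier G (w j) α τ * w j τ) /
            (∑ τ ∈ G.edgeFinset, w j τ)) * w j e)
    -- θ-surgery condition at every step
    (hsurg : ∀ j : ℕ, ∀ e ∈ G.edgeFinset, w j e / edist G (w j) e ≤ θ) :
    ∀ j : ℕ, ∀ e ∈ G.edgeFinset,
      0 < w j e ∧
      (1 - (m : ℝ) * θ * s) ^ j * w 0 e ≤ w j e ∧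
      w j e ≤ ∑ τ ∈ G.edgeFinset, w 0 τ := by
  have hθ0 : (0:ℝ) < θ := by linarith
  have hm0 : 0 < m := by
    by_contra h
    push_neg at h
    interval_cases m
    simp at hs1
    linarith
  have hmθ : (0:ℝ) < (m:ℝ) * θ := by positivity
  have hsm : s * ((m:ℝ) * θ) < 1 := (lt_div_iff₀ hmθ).mp hs1
  have hcoef : (0:ℝ) < 1 - (m:ℝ) * θ * s := by nlinarith
  -- key step lemma
  have key : ∀ j : ℕ, (∀ e ∈ G.edgeFinset, 0 < w j e) →
      (∀ e ∈ G.edgeFinset, (1 - (m:ℝ) * θ * s) * w j e ≤ w (j+1) e ∧ 0 < w (j+1) e) ∧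
      ∑ τ ∈ G.edgeFinset, w (j+1) τ = ∑ τ ∈ G.edgeFinset, w j τ := by
    intro j hpos
    set ω := w j with hωdef
    set S := ∑ τ ∈ G.edgeFinset, ω τ with hSdef
    set κ := fun e => ollivier G ω α e with hκdef
    have hE : G.edgeFinset.Nonempty := Finset.card_pos.mp (hm ▸ hm0)
    have hS : 0 < S := Finset.sum_pos hpos hE
    set K := (∑ τ ∈ G.edgeFinset, κ τ * ω τ) / S with hKdef
    -- bound on K : 1 - mθ ≤ K
    have hsum_lb : (1 - (m:ℝ) * θ) * S ≤ ∑ τ ∈ G.edgeFinset, κ τ * ω τ := by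
      have h1 : ∑ τ ∈ G.edgeFinset, κ τ * ω τ
          = ∑ τ ∈ G.edgeFinset, ω τ - ∑ τ ∈ G.edgeFinset, (1 - κ τ) * ω τ := by
        rw [← Finset.sum_sub_distrib]
        apply Finset.sum_congr rfl
        intro τ _
        ring
      have h2 : ∑ τ ∈ G.edgeFinset, (1 - κ τ) * ω τ ≤ ∑ τ ∈ G.edgeFinset, θ * S := by
        apply Finset.sum_le_sum
        intro τ hτ
        exact one_sub_ollivier_mul_le hconn hpos hα hτ (hsurg j τ hτ)
      have h3 : ∑ τ ∈ G.edgeFinset, θ * S = (m:ℝ) * (θ * S) := by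
        rw [Finset.sum_const, hm, nsmul_eq_mul]
      rw [h1]
      rw [h3] at h2
      nlinarith
    have hK : 1 - (m:ℝ) * θ ≤ K := by
      rw [hKdef, le_div_iff₀ hS]
      linarith [hsum_lb]
    constructor
    · intro e he
      have hκe : κ e ≤ 1 := ollivier_le_one hconn hpos he
      have hflow_e : w (j+1) e = ω e + s * (-(κ e) + K) * ω e := hflow j e he
      have hωe := hpos e he
      have hA : -((m:ℝ) * θ) ≤ -(κ e) + K := by linarith
      have hlow : (1 - (m:ℝ) * θ * s) * ω e ≤ w (j+1) e := by
        rw [hflow_e]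
        nlinarith [mul_nonneg (mul_nonneg hs0.le hωe.le) (by linarith : (0:ℝ) ≤ -(κ e) + K + (m:ℝ) * θ)]
      exact ⟨hlow, lt_of_lt_of_le (by positivity) hlow⟩
    · have : ∑ τ ∈ G.edgeFinset, w (j+1) τ
          = ∑ τ ∈ G.edgeFinset, (ω τ + s * (-(κ τ) + K) * ω τ) :=
        Finset.sum_congr rfl fun τ hτ => hflow j τ hτ
      rw [this, Finset.sum_add_distrib]
      have h4 : ∑ τ ∈ G.edgeFinset, s * (-(κ τ) + K) * ω τ = 0 := by
        have hsplit : ∀ τ ∈ G.edgeFinset,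
            s * (-(κ τ) + K) * ω τ = s * (K * ω τ) - s * (κ τ * ω τ) := fun τ _ => by ring
        have e1 : ∑ τ ∈ G.edgeFinset, s * (K * ω τ) = s * (K * S) := by
          rw [hSdef, ← Finset.mul_sum, ← Finset.mul_sum]
        have e2 : ∑ τ ∈ G.edgeFinset, s * (κ τ * ω τ)
            = s * ∑ τ ∈ G.edgeFinset, κ τ * ω τ := (Finset.mul_sum _ _ _).symm
        have hKS : K * S = ∑ τ ∈ G.edgeFinset, κ τ * ω τ := by
          rw [hKdef, div_mul_cancel₀ _ hS.ne']
        rw [Finset.sum_congr rfl hsplit, Finset.sum_sub_distrib, e1, e2, hKS, sub_self]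
      rw [h4, add_zero]
  -- induction
  have main : ∀ j : ℕ, (∀ e ∈ G.edgeFinset, 0 < w j e ∧ (1 - (m:ℝ) * θ * s) ^ j * w 0 e ≤ w j e)
      ∧ ∑ τ ∈ G.edgeFinset, w j τ = ∑ τ ∈ G.edgeFinset, w 0 τ := by
    intro j
    induction j with
    | zero => exact ⟨fun e he => ⟨hpos0 e he, by simp⟩, rfl⟩
    | succ j ih =>
      obtain ⟨ihper, ihsum⟩ := ih
      have hpos : ∀ e ∈ G.edgeFinset, 0 < w j e := fun e he => (ihper e he).1
      obtain ⟨kper, ksum⟩ := key j hpos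
      refine ⟨fun e he => ⟨(kper e he).2, ?_⟩, by rw [ksum, ihsum]⟩
      have h5 := (kper e he).1
      have h6 := (ihper e he).2
      calc (1 - (m:ℝ) * θ * s) ^ (j+1) * w 0 e
          = (1 - (m:ℝ) * θ * s) * ((1 - (m:ℝ) * θ * s) ^ j * w 0 e) := by ring
        _ ≤ (1 - (m:ℝ) * θ * s) * w j e := by
            exact mul_le_mul_of_nonneg_left h6 hcoef.le
        _ ≤ w (j+1) e := h5
  intro j e he
  obtain ⟨per, sum_eq⟩ := main j
  refine ⟨(per e he).1, (per e he).2, ?_⟩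
  rw [← sum_eq]
  exact Finset.single_le_sum (fun τ hτ => ((per τ hτ).1).le) he
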